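/- arXiv:2502.04061 — 4 statements merged into one kernel-verified Lean document; each statement's English description precedes it below -/
import Mathlib

section
/- Let U ⊆ ℝⁿ be open, g : U → Matrix (Fin n) (Fin n) ℝ smooth with g(x) symmetric and invertible for every x ∈ U, and ω : U → ℝⁿ smooth. Let I ⊆ ℝ be an open interval and let x : I → U and p : I → ℝⁿ be differentiable functions satisfying Hamilton's equations for the magnetic Hamiltonian H̃(x,p) = ½ Σ_{k,l} (g(x)⁻¹)^{kl}(p_k + ω_k(x))(p_l + ω_l(x)), namely ẋⁱ(s) = Σ_l (g(x(s))⁻¹)^{il}(p_l(s) + ω_l(x(s))) and ṗᵢ(s) = −½ Σ_{k,l} ∂ᵢ((g⁻¹)^{kl})(x(s)) (p_k + ω_k)(p_l + ω_l) − Σ_{k,l} (g(x(s))⁻¹)^{kl}(p_k + ω_k) ∂ᵢω_l(x(s)). Then x is twice differentiable on I and satisfies the Lorentz force equation ẍⁱ + Σ_{j,k} Γⁱⱼₖ(x) ẋʲ ẋᵏ = Σ_j Fⁱⱼ(x) ẋʲ. -/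
open scoped BigOperators

/-- Partial derivative `∂ᵢ f (x)` of a function `f : ℝⁿ → ℝ`. -/
noncomputable def pd {n : ℕ} (f : (Fin n → ℝ) → ℝ) (i : Fin n) (x : Fin n → ℝ) : ℝ :=
  fderiv ℝ f x (Pi.single i 1)

/-- Christoffel symbols `Γⁱⱼₖ(x)` of the metric `g`. -/
noncomputable def Christoffel {n : ℕ} (g : (Fin n → ℝ) → Matrix (Fin n) (Fin n) ℝ)
    (x : Fin n → ℝ) (i j k : Fin n) : ℝ :=
  (1 / 2) * ∑ l, (g x)⁻¹ i l *
    (pd (fun y => g y l k) j x + pd (fun y => g y l j) k x - pd (fun y => g y j k) l x)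

/-- Magnetic field `(dω)ᵢⱼ = ∂ᵢωⱼ - ∂ⱼωᵢ`. -/
noncomputable def dOmega {n : ℕ} (ω : (Fin n → ℝ) → Fin n → ℝ)
    (x : Fin n → ℝ) (i j : Fin n) : ℝ :=
  pd (fun y => ω y j) i x - pd (fun y => ω y i) j x

/-- Lorentz force `Fⁱⱼ(x) = -Σ_l (g⁻¹)^{il} (dω)_{lj}(x)`. -/
noncomputable def LorentzF {n : ℕ} (g : (Fin n → ℝ) → Matrix (Fin n) (Fin n) ℝ)
    (ω : (Fin n → ℝ) → Fin n → ℝ) (x : Fin n → ℝ) (i j : Fin n) : ℝ :=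
  -∑ l, (g x)⁻¹ i l * dOmega ω x l j

section Helpers

lemma cdo_prod {n : ℕ} {U : Set (Fin n → ℝ)} {ι : Type*} (s : Finset ι)
    (f : ι → (Fin n → ℝ) → ℝ) (h : ∀ i ∈ s, ContDiffOn ℝ (⊤ : ℕ∞) (f i) U) :
    ContDiffOn ℝ (⊤ : ℕ∞) (fun x => ∏ i ∈ s, f i x) U := by
  classical
  induction s using Finset.induction with
  | empty => simpa using contDiffOn_const
  | @insert a s ha ih =>
    simp only [Finset.prod_insert ha]
    exact (h _ (Finset.mem_insert_self _ _)).mul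
      (ih fun i hi => h i (Finset.mem_insert_of_mem hi))

lemma cdo_det {n : ℕ} {U : Set (Fin n → ℝ)} (M : (Fin n → ℝ) → Matrix (Fin n) (Fin n) ℝ)
    (h : ∀ i j, ContDiffOn ℝ (⊤ : ℕ∞) (fun x => M x i j) U) :
    ContDiffOn ℝ (⊤ : ℕ∞) (fun x => (M x).det) U := by
  simp only [Matrix.det_apply]
  refine ContDiffOn.sum fun σ _ => ?_
  simp only [Units.smul_def, zsmul_eq_mul]
  exact contDiffOn_const.mul (cdo_prod _ _ fun i _ => h (σ i) i)

lemma cdo_inv {n : ℕ} {U : Set (Fin n → ℝ)}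
    (g : (Fin n → ℝ) → Matrix (Fin n) (Fin n) ℝ)
    (hg : ∀ i j, ContDiffOn ℝ (⊤ : ℕ∞) (fun x => g x i j) U)
    (hginv : ∀ x ∈ U, IsUnit (g x).det) (k l : Fin n) :
    ContDiffOn ℝ (⊤ : ℕ∞) (fun y => (g y)⁻¹ k l) U := by
  classical
  have hdet : ContDiffOn ℝ (⊤ : ℕ∞) (fun y => (g y).det) U := cdo_det _ hg
  have hadj : ContDiffOn ℝ (⊤ : ℕ∞) (fun y => (g y).adjugate k l) U := by
    simp only [Matrix.adjugate_apply]
    refine cdo_det _ fun i j => ?_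
    simp only [Matrix.updateRow_apply]
    by_cases hij : i = l
    · simp only [hij, if_pos rfl]
      exact contDiffOn_const
    · simp only [if_neg hij]
      exact hg i j
  refine ContDiffOn.congr ((hdet.inv fun y hy =>
    (isUnit_iff_ne_zero.mp (hginv y hy))).mul hadj) fun y hy => ?_
  rw [Matrix.inv_def]
  simp [Ring.inverse_eq_inv', div_eq_inv_mul]

lemma fderiv_apply_eq_sum_pd {n : ℕ} {f : (Fin n → ℝ) → ℝ} {x v : Fin n → ℝ} :
    fderiv ℝ f x v = ∑ m, v m * pd f m x := by
  have hv : v = ∑ m, v m • (Pi.single m 1 : Fin n → ℝ) := by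
    ext j
    simp [Finset.sum_apply, Pi.single_apply]
  conv_lhs => rw [hv]
  rw [map_sum]
  simp [pd]

lemma curve_deriv {n : ℕ} {f : (Fin n → ℝ) → ℝ} {x : ℝ → Fin n → ℝ} {x' : Fin n → ℝ} {s : ℝ}
    (hf : DifferentiableAt ℝ f (x s)) (hx : HasDerivAt x x' s) :
    HasDerivAt (fun t => f (x t)) (∑ m, x' m * pd f m (x s)) s := by
  have h := hf.hasFDerivAt.comp_hasDerivAt s hx
  rwa [fderiv_apply_eq_sum_pd] at h

lemma pd_of_eqOn_const {n : ℕ} {U : Set (Fin n → ℝ)} (hU : IsOpen U) {f : (Fin n → ℝ) → ℝ}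
    {c : ℝ} (h : ∀ y ∈ U, f y = c) {x : Fin n → ℝ} (hx : x ∈ U) (m : Fin n) :
    pd f m x = 0 := by
  have : f =ᶠ[nhds x] fun _ => c :=
    Filter.eventuallyEq_iff_exists_mem.mpr ⟨U, hU.mem_nhds hx, h⟩
  rw [pd, this.fderiv_eq, fderiv_fun_const]
  simp

lemma pd_sum_mul {n : ℕ} {fi gi : Fin n → (Fin n → ℝ) → ℝ} {x : Fin n → ℝ}
    (hfi : ∀ c, DifferentiableAt ℝ (fi c) x) (hgi : ∀ c, DifferentiableAt ℝ (gi c) x)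
    (m : Fin n) :
    pd (fun y => ∑ c, fi c y * gi c y) m x
      = ∑ c, (pd (fi c) m x * gi c x + fi c x * pd (gi c) m x) := by
  have H : HasFDerivAt (fun y => ∑ c, fi c y * gi c y)
      (∑ c, (fi c x • fderiv ℝ (gi c) x + gi c x • fderiv ℝ (fi c) x)) x :=
    HasFDerivAt.fun_sum fun c _ => (hfi c).hasFDerivAt.mul (hgi c).hasFDerivAt
  rw [pd, H.fderiv]
  simp only [ContinuousLinearMap.sum_apply, ContinuousLinearMap.add_apply,
    ContinuousLinearMap.smul_apply, smul_eq_mul, pd]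
  exact Finset.sum_congr rfl fun c _ => by ring

lemma pd_inv_entry {n : ℕ} {U : Set (Fin n → ℝ)} (hU : IsOpen U)
    {g : (Fin n → ℝ) → Matrix (Fin n) (Fin n) ℝ}
    (hgd : ∀ a b, ∀ y ∈ U, DifferentiableAt ℝ (fun y => g y a b) y)
    (hid : ∀ a b, ∀ y ∈ U, DifferentiableAt ℝ (fun y => (g y)⁻¹ a b) y)
    (hginv : ∀ y ∈ U, IsUnit (g y).det)
    {x : Fin n → ℝ} (hx : x ∈ U) (m k l : Fin n) :
    pd (fun y => (g y)⁻¹ k l) m x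
      = -∑ a, ∑ c, (g x)⁻¹ k a * pd (fun y => g y a c) m x * (g x)⁻¹ c l := by
  classical
  have key : ∀ a, ∑ c, (pd (fun y => g y a c) m x * (g x)⁻¹ c l
      + g x a c * pd (fun y => (g y)⁻¹ c l) m x) = 0 := by
    intro a
    rw [← pd_sum_mul (fun c => hgd a c x hx) (fun c => hid c l x hx) m]
    refine pd_of_eqOn_const hU (c := if a = l then 1 else 0) (fun y hy => ?_) hx m
    have h1 : ∑ c, g y a c * (g y)⁻¹ c l = (g y * (g y)⁻¹) a l := (Matrix.mul_apply).symm
    rw [h1, Matrix.mul_nonsing_inv (g y) (hginv y hy), Matrix.one_apply]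
  have key2 : ∀ a, ∑ c, g x a c * pd (fun y => (g y)⁻¹ c l) m x
      = -∑ c, pd (fun y => g y a c) m x * (g x)⁻¹ c l := by
    intro a
    have h := key a
    rw [Finset.sum_add_distrib] at h
    linarith
  have hone : ∀ c, ((1 : Matrix (Fin n) (Fin n) ℝ) k c) = ∑ a, (g x)⁻¹ k a * g x a c := by
    intro c
    rw [← Matrix.nonsing_inv_mul (g x) (hginv x hx), Matrix.mul_apply]
  calc pd (fun y => (g y)⁻¹ k l) m x
      = ∑ c, (1 : Matrix (Fin n) (Fin n) ℝ) k c * pd (fun y => (g y)⁻¹ c l) m x := by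
        simp [Matrix.one_apply]
    _ = ∑ a, (g x)⁻¹ k a * ∑ c, g x a c * pd (fun y => (g y)⁻¹ c l) m x := by
        simp only [hone, Finset.sum_mul]
        rw [Finset.sum_comm]
        refine Finset.sum_congr rfl fun a _ => ?_
        rw [Finset.mul_sum]
        exact Finset.sum_congr rfl fun c _ => by ring
    _ = -∑ a, ∑ c, (g x)⁻¹ k a * pd (fun y => g y a c) m x * (g x)⁻¹ c l := by
        simp only [key2]
        rw [← Finset.sum_neg_distrib]
        refine Finset.sum_congr rfl fun a _ => ?_
        rw [mul_neg, Finset.mul_sum]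
        exact congrArg Neg.neg (Finset.sum_congr rfl fun c _ => by ring)

end Helpers

/-- Solutions of Hamilton's equations for the magnetic Hamiltonian
`H̃(x,p) = ½ Σ (g⁻¹)^{kl}(p_k + ω_k)(p_l + ω_l)` are twice differentiable and satisfy the
Lorentz force equation `ẍⁱ + Γⁱⱼₖ(x) ẋʲ ẋᵏ = Fⁱⱼ(x) ẋʲ`. -/
theorem hamilton_implies_lorentz_force
    (n : ℕ) (U : Set (Fin n → ℝ)) (hU : IsOpen U)
    (g : (Fin n → ℝ) → Matrix (Fin n) (Fin n) ℝ)
    (hg : ∀ i j, ContDiffOn ℝ (⊤ : ℕ∞) (fun x => g x i j) U)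
    (hgsymm : ∀ x ∈ U, (g x).IsSymm)
    (hginv : ∀ x ∈ U, IsUnit (g x).det)
    (ω : (Fin n → ℝ) → Fin n → ℝ)
    (hω : ∀ i, ContDiffOn ℝ (⊤ : ℕ∞) (fun x => ω x i) U)
    (a b : ℝ)
    (x p x' p' : ℝ → Fin n → ℝ)
    (hxU : ∀ s ∈ Set.Ioo a b, x s ∈ U)
    (hx : ∀ s ∈ Set.Ioo a b, HasDerivAt x (x' s) s)
    (hp : ∀ s ∈ Set.Ioo a b, HasDerivAt p (p' s) s)
    (hamilton1 : ∀ s ∈ Set.Ioo a b, ∀ i,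
      x' s i = ∑ l, (g (x s))⁻¹ i l * (p s l + ω (x s) l))
    (hamilton2 : ∀ s ∈ Set.Ioo a b, ∀ i,
      p' s i =
        -(1 / 2) * ∑ k, ∑ l, pd (fun y => (g y)⁻¹ k l) i (x s)
            * (p s k + ω (x s) k) * (p s l + ω (x s) l)
          - ∑ k, ∑ l, (g (x s))⁻¹ k l * (p s k + ω (x s) k) * pd (fun y => ω y l) i (x s)) :
    ∃ x'' : ℝ → Fin n → ℝ,
      (∀ s ∈ Set.Ioo a b, HasDerivAt x' (x'' s) s) ∧
      (∀ s ∈ Set.Ioo a b, ∀ i,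
        x'' s i + ∑ j, ∑ k, Christoffel g (x s) i j k * x' s j * x' s k
          = ∑ j, LorentzF g ω (x s) i j * x' s j) := by
  classical
  have hGinv : ∀ k l, ContDiffOn ℝ (⊤ : ℕ∞) (fun y => (g y)⁻¹ k l) U := cdo_inv g hg hginv
  have hgd : ∀ a c, ∀ y ∈ U, DifferentiableAt ℝ (fun y => g y a c) y := fun a c y hy =>
    ((hg a c).contDiffAt (hU.mem_nhds hy)).differentiableAt (by simp)
  have hid : ∀ a c, ∀ y ∈ U, DifferentiableAt ℝ (fun y => (g y)⁻¹ a c) y := fun a c y hy =>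
    ((hGinv a c).contDiffAt (hU.mem_nhds hy)).differentiableAt (by simp)
  have hwd : ∀ l, ∀ y ∈ U, DifferentiableAt ℝ (fun y => ω y l) y := fun l y hy =>
    ((hω l).contDiffAt (hU.mem_nhds hy)).differentiableAt (by simp)
  refine ⟨fun s i =>
    ∑ l, ((∑ m, x' s m * pd (fun y => (g y)⁻¹ i l) m (x s)) * (p s l + ω (x s) l)
      + (g (x s))⁻¹ i l * (p' s l + ∑ m, x' s m * pd (fun y => ω y l) m (x s))), ?_, ?_⟩
  · -- differentiability of x'
    intro s hs
    rw [hasDerivAt_pi]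
    intro i
    have hF : HasDerivAt (fun t => ∑ l, (g (x t))⁻¹ i l * (p t l + ω (x t) l))
        (∑ l, ((∑ m, x' s m * pd (fun y => (g y)⁻¹ i l) m (x s)) * (p s l + ω (x s) l)
          + (g (x s))⁻¹ i l * (p' s l + ∑ m, x' s m * pd (fun y => ω y l) m (x s)))) s := by
      refine HasDerivAt.fun_sum fun l _ => ?_
      have h1 : HasDerivAt (fun t => (g (x t))⁻¹ i l)
          (∑ m, x' s m * pd (fun y => (g y)⁻¹ i l) m (x s)) s :=
        curve_deriv (hid i l (x s) (hxU s hs)) (hx s hs)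
      have h2 : HasDerivAt (fun t => p t l + ω (x t) l)
          (p' s l + ∑ m, x' s m * pd (fun y => ω y l) m (x s)) s :=
        ((hasDerivAt_pi.mp (hp s hs)) l).add (curve_deriv (hwd l (x s) (hxU s hs)) (hx s hs))
      exact h1.mul h2
    refine hF.congr_of_eventuallyEq ?_
    filter_upwards [isOpen_Ioo.mem_nhds hs] with t ht
    exact hamilton1 t ht i
  · -- the Lorentz force equation
    intro s hs i
    have hX : x s ∈ U := hxU s hs
    have hu : ∀ j, x' s j = ∑ l, (g (x s))⁻¹ j l * (p s l + ω (x s) l) := hamilton1 s hs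
    have hAs : ∀ a c, (g (x s))⁻¹ a c = (g (x s))⁻¹ c a := by
      intro a c
      have h1 : ((g (x s))⁻¹).transpose = (g (x s))⁻¹ := by
        rw [Matrix.transpose_nonsing_inv, (hgsymm (x s) hX).eq]
      calc (g (x s))⁻¹ a c = ((g (x s))⁻¹).transpose c a := (Matrix.transpose_apply _ c a).symm
        _ = (g (x s))⁻¹ c a := by rw [h1]
    have hu2 : ∀ c, ∑ k, (g (x s))⁻¹ k c * (p s k + ω (x s) k) = x' s c := by
      intro c
      rw [hu c]
      exact Finset.sum_congr rfl fun k _ => by rw [hAs k c]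
    have hA : ∀ m k l, pd (fun y => (g y)⁻¹ k l) m (x s)
        = -∑ a, ∑ c, (g (x s))⁻¹ k a * pd (fun y => g y a c) m (x s) * (g (x s))⁻¹ c l :=
      fun m k l => pd_inv_entry hU hgd hid hginv hX m k l
    -- abbreviations (purely for readability of the skeleton below)
    -- T1, T2, T3, S, R, W1, W2
    have inner1 : ∀ m, ∑ l, pd (fun y => (g y)⁻¹ i l) m (x s) * (p s l + ω (x s) l)
        = -∑ a, ∑ c, (g (x s))⁻¹ i a * pd (fun y => g y a c) m (x s) * x' s c := by
      intro m
      calc ∑ l, pd (fun y => (g y)⁻¹ i l) m (x s) * (p s l + ω (x s) l)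
          = -∑ l, ∑ a, ∑ c, (g (x s))⁻¹ i a * pd (fun y => g y a c) m (x s)
              * ((g (x s))⁻¹ c l * (p s l + ω (x s) l)) := by
            rw [← Finset.sum_neg_distrib]
            refine Finset.sum_congr rfl fun l _ => ?_
            rw [hA m i l, neg_mul]
            congr 1
            simp only [Finset.sum_mul]
            exact Finset.sum_congr rfl fun a' _ => Finset.sum_congr rfl fun c _ => by ring
        _ = -∑ a, ∑ c, (g (x s))⁻¹ i a * pd (fun y => g y a c) m (x s)
              * ∑ l, (g (x s))⁻¹ c l * (p s l + ω (x s) l) := by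
            congr 1
            rw [Finset.sum_comm]
            refine Finset.sum_congr rfl fun a' _ => ?_
            rw [Finset.sum_comm]
            refine Finset.sum_congr rfl fun c _ => ?_
            rw [Finset.mul_sum]
        _ = -∑ a, ∑ c, (g (x s))⁻¹ i a * pd (fun y => g y a c) m (x s) * x' s c := by
            congr 1
            exact Finset.sum_congr rfl fun a' _ => Finset.sum_congr rfl fun c _ => by rw [← hu c]
    have eT1 : ∑ l, (∑ m, x' s m * pd (fun y => (g y)⁻¹ i l) m (x s)) * (p s l + ω (x s) l)
        = -∑ a, ∑ m, ∑ c, (g (x s))⁻¹ i a * pd (fun y => g y a c) m (x s) * x' s m * x' s c := by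
      calc ∑ l, (∑ m, x' s m * pd (fun y => (g y)⁻¹ i l) m (x s)) * (p s l + ω (x s) l)
          = ∑ l, ∑ m, x' s m * (pd (fun y => (g y)⁻¹ i l) m (x s) * (p s l + ω (x s) l)) := by
            refine Finset.sum_congr rfl fun l _ => ?_
            rw [Finset.sum_mul]
            exact Finset.sum_congr rfl fun m _ => by ring
        _ = ∑ m, ∑ l, x' s m * (pd (fun y => (g y)⁻¹ i l) m (x s) * (p s l + ω (x s) l)) :=
            Finset.sum_comm
        _ = ∑ m, x' s m * ∑ l, pd (fun y => (g y)⁻¹ i l) m (x s) * (p s l + ω (x s) l) := by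
            exact Finset.sum_congr rfl fun m _ => (Finset.mul_sum _ _ _).symm
        _ = ∑ m, x' s m
              * -∑ a, ∑ c, (g (x s))⁻¹ i a * pd (fun y => g y a c) m (x s) * x' s c := by
            exact Finset.sum_congr rfl fun m _ => by rw [inner1 m]
        _ = -∑ m, ∑ a, ∑ c, (g (x s))⁻¹ i a * pd (fun y => g y a c) m (x s) * x' s m * x' s c := by
            rw [← Finset.sum_neg_distrib]
            refine Finset.sum_congr rfl fun m _ => ?_
            rw [mul_neg]
            congr 1
            rw [Finset.mul_sum]
            refine Finset.sum_congr rfl fun a' _ => ?_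
            rw [Finset.mul_sum]
            exact Finset.sum_congr rfl fun c _ => by ring
        _ = -∑ a, ∑ m, ∑ c, (g (x s))⁻¹ i a * pd (fun y => g y a c) m (x s) * x' s m * x' s c := by
            rw [Finset.sum_comm]
    have inner2 : ∀ l, ∑ k, ∑ c, pd (fun y => (g y)⁻¹ k c) l (x s)
          * (p s k + ω (x s) k) * (p s c + ω (x s) c)
        = -∑ m, ∑ c, pd (fun y => g y m c) l (x s) * x' s m * x' s c := by
      intro l
      calc ∑ k, ∑ c, pd (fun y => (g y)⁻¹ k c) l (x s)
              * (p s k + ω (x s) k) * (p s c + ω (x s) c)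
          = -∑ k, ∑ c, ∑ a, ∑ e, (g (x s))⁻¹ k a * pd (fun y => g y a e) l (x s) * (g (x s))⁻¹ e c
              * (p s k + ω (x s) k) * (p s c + ω (x s) c) := by
            rw [← Finset.sum_neg_distrib]
            refine Finset.sum_congr rfl fun k _ => ?_
            rw [← Finset.sum_neg_distrib]
            refine Finset.sum_congr rfl fun c _ => ?_
            rw [hA l k c, neg_mul, neg_mul]
            congr 1
            simp only [Finset.sum_mul]
        _ = -∑ a, ∑ e, ∑ k, ∑ c, (g (x s))⁻¹ k a * pd (fun y => g y a e) l (x s) * (g (x s))⁻¹ e c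
              * (p s k + ω (x s) k) * (p s c + ω (x s) c) := by
            congr 1
            calc ∑ k, ∑ c, ∑ a, ∑ e, (g (x s))⁻¹ k a * pd (fun y => g y a e) l (x s)
                  * (g (x s))⁻¹ e c * (p s k + ω (x s) k) * (p s c + ω (x s) c)
                = ∑ k, ∑ a, ∑ c, ∑ e, (g (x s))⁻¹ k a * pd (fun y => g y a e) l (x s)
                  * (g (x s))⁻¹ e c * (p s k + ω (x s) k) * (p s c + ω (x s) c) :=
                  Finset.sum_congr rfl fun k _ => Finset.sum_comm
              _ = ∑ a, ∑ k, ∑ c, ∑ e, (g (x s))⁻¹ k a * pd (fun y => g y a e) l (x s)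
                  * (g (x s))⁻¹ e c * (p s k + ω (x s) k) * (p s c + ω (x s) c) :=
                  Finset.sum_comm
              _ = ∑ a, ∑ k, ∑ e, ∑ c, (g (x s))⁻¹ k a * pd (fun y => g y a e) l (x s)
                  * (g (x s))⁻¹ e c * (p s k + ω (x s) k) * (p s c + ω (x s) c) :=
                  Finset.sum_congr rfl fun a' _ => Finset.sum_congr rfl fun k _ => Finset.sum_comm
              _ = ∑ a, ∑ e, ∑ k, ∑ c, (g (x s))⁻¹ k a * pd (fun y => g y a e) l (x s)
                  * (g (x s))⁻¹ e c * (p s k + ω (x s) k) * (p s c + ω (x s) c) :=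
                  Finset.sum_congr rfl fun a' _ => Finset.sum_comm
        _ = -∑ a, ∑ e, pd (fun y => g y a e) l (x s)
              * (∑ k, (g (x s))⁻¹ k a * (p s k + ω (x s) k))
              * (∑ c, (g (x s))⁻¹ e c * (p s c + ω (x s) c)) := by
            congr 1
            refine Finset.sum_congr rfl fun a' _ => Finset.sum_congr rfl fun e _ => ?_
            rw [mul_assoc, Finset.sum_mul_sum, Finset.mul_sum]
            refine Finset.sum_congr rfl fun k _ => ?_
            rw [Finset.mul_sum]
            exact Finset.sum_congr rfl fun c _ => by ring
        _ = -∑ m, ∑ c, pd (fun y => g y m c) l (x s) * x' s m * x' s c := by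
            congr 1
            refine Finset.sum_congr rfl fun a' _ => Finset.sum_congr rfl fun e _ => ?_
            rw [hu2 a', ← hu e]
    have inner3 : ∀ l, ∑ k, ∑ c, (g (x s))⁻¹ k c * (p s k + ω (x s) k)
          * pd (fun y => ω y c) l (x s)
        = ∑ c, x' s c * pd (fun y => ω y c) l (x s) := by
      intro l
      rw [Finset.sum_comm]
      refine Finset.sum_congr rfl fun c _ => ?_
      rw [← Finset.sum_mul, hu2 c]
    have eT2 : ∑ l, (g (x s))⁻¹ i l * p' s l
        = (1/2) * ∑ a, ∑ m, ∑ c, (g (x s))⁻¹ i a * pd (fun y => g y m c) a (x s) * x' s m * x' s c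
          - ∑ a, ∑ m, (g (x s))⁻¹ i a * pd (fun y => ω y m) a (x s) * x' s m := by
      calc ∑ l, (g (x s))⁻¹ i l * p' s l
          = ∑ l, ((1/2) * ((g (x s))⁻¹ i l * ∑ m, ∑ c, pd (fun y => g y m c) l (x s) * x' s m * x' s c)
              - (g (x s))⁻¹ i l * ∑ c, x' s c * pd (fun y => ω y c) l (x s)) := by
            refine Finset.sum_congr rfl fun l _ => ?_
            rw [hamilton2 s hs l, inner2 l, inner3 l]
            ring
        _ = (1/2) * ∑ a, ∑ m, ∑ c, (g (x s))⁻¹ i a * pd (fun y => g y m c) a (x s) * x' s m * x' s c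
              - ∑ a, ∑ m, (g (x s))⁻¹ i a * pd (fun y => ω y m) a (x s) * x' s m := by
            rw [Finset.sum_sub_distrib]
            congr 1
            · rw [Finset.mul_sum]
              refine Finset.sum_congr rfl fun l _ => ?_
              congr 1
              rw [Finset.mul_sum]
              refine Finset.sum_congr rfl fun m _ => ?_
              rw [Finset.mul_sum]
              exact Finset.sum_congr rfl fun c _ => by ring
            · refine Finset.sum_congr rfl fun l _ => ?_
              rw [Finset.mul_sum]
              exact Finset.sum_congr rfl fun c _ => by ring
    have eT3 : ∑ l, (g (x s))⁻¹ i l * ∑ m, x' s m * pd (fun y => ω y l) m (x s)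
        = ∑ a, ∑ m, (g (x s))⁻¹ i a * pd (fun y => ω y a) m (x s) * x' s m := by
      refine Finset.sum_congr rfl fun l _ => ?_
      rw [Finset.mul_sum]
      exact Finset.sum_congr rfl fun m _ => by ring
    have eG : ∑ j, ∑ k, Christoffel g (x s) i j k * x' s j * x' s k
        = ∑ a, ∑ m, ∑ c, (g (x s))⁻¹ i a * pd (fun y => g y a c) m (x s) * x' s m * x' s c
          - (1/2) * ∑ a, ∑ m, ∑ c, (g (x s))⁻¹ i a * pd (fun y => g y m c) a (x s) * x' s m * x' s c := by
      have hsplit : ∑ j, ∑ k, Christoffel g (x s) i j k * x' s j * x' s k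
          = (∑ l, ∑ j, ∑ k, (1/2) * ((g (x s))⁻¹ i l * pd (fun y => g y l k) j (x s) * x' s j * x' s k))
            + (∑ l, ∑ j, ∑ k, (1/2) * ((g (x s))⁻¹ i l * pd (fun y => g y l j) k (x s) * x' s j * x' s k))
            - (∑ l, ∑ j, ∑ k, (1/2) * ((g (x s))⁻¹ i l * pd (fun y => g y j k) l (x s) * x' s j * x' s k)) := by
        calc ∑ j, ∑ k, Christoffel g (x s) i j k * x' s j * x' s k
            = ∑ j, ∑ k, ∑ l,
                ((1/2) * ((g (x s))⁻¹ i l * pd (fun y => g y l k) j (x s) * x' s j * x' s k)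
                + (1/2) * ((g (x s))⁻¹ i l * pd (fun y => g y l j) k (x s) * x' s j * x' s k)
                - (1/2) * ((g (x s))⁻¹ i l * pd (fun y => g y j k) l (x s) * x' s j * x' s k)) := by
              refine Finset.sum_congr rfl fun j _ => Finset.sum_congr rfl fun k _ => ?_
              simp only [Christoffel, Finset.mul_sum, Finset.sum_mul]
              exact Finset.sum_congr rfl fun l _ => by ring
          _ = ∑ l, ∑ j, ∑ k,
                ((1/2) * ((g (x s))⁻¹ i l * pd (fun y => g y l k) j (x s) * x' s j * x' s k)
                + (1/2) * ((g (x s))⁻¹ i l * pd (fun y => g y l j) k (x s) * x' s j * x' s k)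
                - (1/2) * ((g (x s))⁻¹ i l * pd (fun y => g y j k) l (x s) * x' s j * x' s k)) := by
              calc ∑ j, ∑ k, ∑ l,
                    ((1/2) * ((g (x s))⁻¹ i l * pd (fun y => g y l k) j (x s) * x' s j * x' s k)
                    + (1/2) * ((g (x s))⁻¹ i l * pd (fun y => g y l j) k (x s) * x' s j * x' s k)
                    - (1/2) * ((g (x s))⁻¹ i l * pd (fun y => g y j k) l (x s) * x' s j * x' s k))
                  = ∑ j, ∑ l, ∑ k,
                    ((1/2) * ((g (x s))⁻¹ i l * pd (fun y => g y l k) j (x s) * x' s j * x' s k)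
                    + (1/2) * ((g (x s))⁻¹ i l * pd (fun y => g y l j) k (x s) * x' s j * x' s k)
                    - (1/2) * ((g (x s))⁻¹ i l * pd (fun y => g y j k) l (x s) * x' s j * x' s k)) :=
                    Finset.sum_congr rfl fun j _ => Finset.sum_comm
                _ = ∑ l, ∑ j, ∑ k,
                    ((1/2) * ((g (x s))⁻¹ i l * pd (fun y => g y l k) j (x s) * x' s j * x' s k)
                    + (1/2) * ((g (x s))⁻¹ i l * pd (fun y => g y l j) k (x s) * x' s j * x' s k)
                    - (1/2) * ((g (x s))⁻¹ i l * pd (fun y => g y j k) l (x s) * x' s j * x' s k)) :=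
                    Finset.sum_comm
          _ = _ := by
              simp only [Finset.sum_add_distrib, Finset.sum_sub_distrib]
      have hb2 : ∑ l, ∑ j, ∑ k, (1/2) * ((g (x s))⁻¹ i l * pd (fun y => g y l j) k (x s) * x' s j * x' s k)
          = ∑ l, ∑ j, ∑ k, (1/2) * ((g (x s))⁻¹ i l * pd (fun y => g y l k) j (x s) * x' s j * x' s k) := by
        refine Finset.sum_congr rfl fun l _ => ?_
        rw [Finset.sum_comm]
        exact Finset.sum_congr rfl fun j _ => Finset.sum_congr rfl fun k _ => by ring
      have hhalf : ∀ X : ℝ, (1/2 : ℝ) * X + (1/2) * X = X := fun X => by ring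
      rw [hsplit, hb2]
      have h1 : (∑ l, ∑ j, ∑ k, (1/2) * ((g (x s))⁻¹ i l * pd (fun y => g y l k) j (x s) * x' s j * x' s k))
            + (∑ l, ∑ j, ∑ k, (1/2) * ((g (x s))⁻¹ i l * pd (fun y => g y l k) j (x s) * x' s j * x' s k))
          = ∑ a, ∑ m, ∑ c, (g (x s))⁻¹ i a * pd (fun y => g y a c) m (x s) * x' s m * x' s c := by
        rw [← Finset.sum_add_distrib]
        refine Finset.sum_congr rfl fun l _ => ?_
        rw [← Finset.sum_add_distrib]
        refine Finset.sum_congr rfl fun j _ => ?_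
        rw [← Finset.sum_add_distrib]
        exact Finset.sum_congr rfl fun k _ => by ring
      have h2 : ∑ l, ∑ j, ∑ k, (1/2) * ((g (x s))⁻¹ i l * pd (fun y => g y j k) l (x s) * x' s j * x' s k)
          = (1/2) * ∑ a, ∑ m, ∑ c, (g (x s))⁻¹ i a * pd (fun y => g y m c) a (x s) * x' s m * x' s c := by
        simp only [Finset.mul_sum]
      rw [h1, h2]
    have eF : ∑ j, LorentzF g ω (x s) i j * x' s j
        = ∑ a, ∑ m, (g (x s))⁻¹ i a * pd (fun y => ω y a) m (x s) * x' s m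
          - ∑ a, ∑ m, (g (x s))⁻¹ i a * pd (fun y => ω y m) a (x s) * x' s m := by
      calc ∑ j, LorentzF g ω (x s) i j * x' s j
          = ∑ j, ∑ l, ((g (x s))⁻¹ i l * pd (fun y => ω y l) j (x s) * x' s j
              - (g (x s))⁻¹ i l * pd (fun y => ω y j) l (x s) * x' s j) := by
            refine Finset.sum_congr rfl fun j _ => ?_
            simp only [LorentzF, dOmega, neg_mul, Finset.sum_mul]
            rw [← Finset.sum_neg_distrib]
            exact Finset.sum_congr rfl fun l _ => by ring
        _ = (∑ j, ∑ l, (g (x s))⁻¹ i l * pd (fun y => ω y l) j (x s) * x' s j)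
              - ∑ j, ∑ l, (g (x s))⁻¹ i l * pd (fun y => ω y j) l (x s) * x' s j := by
            simp only [Finset.sum_sub_distrib]
        _ = ∑ a, ∑ m, (g (x s))⁻¹ i a * pd (fun y => ω y a) m (x s) * x' s m
              - ∑ a, ∑ m, (g (x s))⁻¹ i a * pd (fun y => ω y m) a (x s) * x' s m := by
            congr 1
            · exact Finset.sum_comm
            · exact Finset.sum_comm
    have eX : ∑ l, ((∑ m, x' s m * pd (fun y => (g y)⁻¹ i l) m (x s)) * (p s l + ω (x s) l)
          + (g (x s))⁻¹ i l * (p' s l + ∑ m, x' s m * pd (fun y => ω y l) m (x s)))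
        = (∑ l, (∑ m, x' s m * pd (fun y => (g y)⁻¹ i l) m (x s)) * (p s l + ω (x s) l))
          + (∑ l, (g (x s))⁻¹ i l * p' s l)
          + (∑ l, (g (x s))⁻¹ i l * ∑ m, x' s m * pd (fun y => ω y l) m (x s)) := by
      simp only [mul_add, Finset.sum_add_distrib]
      ring
    beta_reduce
    rw [eX]
    linarith [eT1, eT2, eT3, eG, eF]
end

section
/- Let U ⊆ ℝⁿ be open, g : U → Matrix (Fin n) (Fin n) ℝ smooth with g(x) symmetric and invertible for every x ∈ U, and ω : U → ℝⁿ smooth. Let m ∈ ℕ and let ξ be a smooth field on U of symmetric m-multilinear forms, with components ξ_{j₁…j_m}(x) symmetric under permutation of the indices. Define the covariant derivative of ξ by (∇ξ)_{i;j₁…j_m} = ∂ᵢ ξ_{j₁…j_m} − Σ_{a=1}^{m} Σ_k Γᵏᵢⱼₐ ξ_{j₁…j_{a−1} k j_{a+1}…j_m}. If x : I → U is a twice differentiable curve on an open interval I satisfying the Lorentz force equation ẍⁱ + Σ_{j,k} Γⁱⱼₖ(x) ẋʲ ẋᵏ = Σ_j Fⁱⱼ(x) ẋʲ, then for all s ∈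 I: d/ds [ Σ ξ_{j₁…j_m}(x(s)) ẋ^{j₁} ⋯ ẋ^{j_m} ] = Σ (∇ξ)_{i;j₁…j_m}(x(s)) ẋⁱ ẋ^{j₁} ⋯ ẋ^{j_m} + m · Σ ξ_{k j₂…j_m}(x(s)) Fᵏⱼ(x(s)) ẋʲ ẋ^{j₂} ⋯ ẋ^{j_m}. (This is the coordinate form of the identity G l_m ξ = l_{m+1} dˢξ + m·l_m F*(ξ), where G is the magnetic geodesic vector field.) -/
open scoped BigOperators

/-- Covariant derivative of a symmetric `m`-tensor field with components `ξ_J`, `J` a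
multi-index: `(∇ξ)_{i;J} = ∂ᵢ ξ_J - Σ_{a} Σ_k Γᵏ_{i J(a)} ξ_{J[a ↦ k]}`. -/
noncomputable def covDeriv {n m : ℕ} (g : (Fin n → ℝ) → Matrix (Fin n) (Fin n) ℝ)
    (ξ : (Fin n → ℝ) → (Fin m → Fin n) → ℝ) (i : Fin n) (J : Fin m → Fin n)
    (x : Fin n → ℝ) : ℝ :=
  pd (fun y => ξ y J) i x
    - ∑ a : Fin m, ∑ k, Christoffel g x k i (J a) * ξ x (Function.update J a k)

/-- Along a magnetic geodesic `x`, the derivative of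
`s ↦ Σ_J ξ_J(x(s)) ẋ^{J(1)}⋯ẋ^{J(m)}` equals
`Σ (∇ξ)_{i;J}(x) ẋⁱ ẋ^{J(1)}⋯ẋ^{J(m)} + m·Σ ξ_{k j₂…j_m}(x) Fᵏⱼ(x) ẋʲ ẋ^{j₂}⋯ẋ^{j_m}`, the
second term being written, using the symmetry of `ξ`, as the sum over the `m` slots of `ξ`
of contraction of that slot with `F(ẋ)`; this is the coordinate form of
`G l_m ξ = l_{m+1} dˢξ + m · l_m F*(ξ)`. -/
theorem magnetic_derivative_of_tensor_along_geodesic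
    (n m : ℕ) (U : Set (Fin n → ℝ)) (hU : IsOpen U)
    (g : (Fin n → ℝ) → Matrix (Fin n) (Fin n) ℝ)
    (hg : ∀ i j, ContDiffOn ℝ (⊤ : ℕ∞) (fun x => g x i j) U)
    (hgsymm : ∀ x ∈ U, (g x).IsSymm)
    (hginv : ∀ x ∈ U, IsUnit (g x).det)
    (ω : (Fin n → ℝ) → Fin n → ℝ)
    (hω : ∀ i, ContDiffOn ℝ (⊤ : ℕ∞) (fun x => ω x i) U)
    (ξ : (Fin n → ℝ) → (Fin m → Fin n) → ℝ)
    (hξsmooth : ∀ J, ContDiffOn ℝ (⊤ : ℕ∞) (fun x => ξ x J) U)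
    (hξsymm : ∀ x, ∀ σ : Equiv.Perm (Fin m), ∀ J : Fin m → Fin n, ξ x (J ∘ σ) = ξ x J)
    (a b : ℝ)
    (x x' x'' : ℝ → Fin n → ℝ)
    (hxU : ∀ s ∈ Set.Ioo a b, x s ∈ U)
    (hx : ∀ s ∈ Set.Ioo a b, HasDerivAt x (x' s) s)
    (hx' : ∀ s ∈ Set.Ioo a b, HasDerivAt x' (x'' s) s)
    (lorentz : ∀ s ∈ Set.Ioo a b, ∀ i,
      x'' s i + ∑ j, ∑ k, Christoffel g (x s) i j k * x' s j * x' s k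
        = ∑ j, LorentzF g ω (x s) i j * x' s j) :
    ∀ s ∈ Set.Ioo a b,
      HasDerivAt (fun r => ∑ J : Fin m → Fin n, ξ (x r) J * ∏ c, x' r (J c))
        ((∑ i, ∑ J : Fin m → Fin n, covDeriv g ξ i J (x s) * x' s i * ∏ c, x' s (J c))
          + ∑ c : Fin m, ∑ J : Fin m → Fin n,
              ξ (x s) J * (∑ j, LorentzF g ω (x s) (J c) j * x' s j)
                * ∏ e ∈ Finset.univ.erase c, x' s (J e))
        s := by
  intro s hs
  have hx0U := hxU s hs
  -- chain rule for the tensor components along the curve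
  have hchain : ∀ J : Fin m → Fin n, HasDerivAt (fun r => ξ (x r) J)
      (∑ i, pd (fun y => ξ y J) i (x s) * x' s i) s := by
    intro J
    have hdA : DifferentiableAt ℝ (fun y => ξ y J) (x s) :=
      ((hξsmooth J).differentiableOn (by simp)).differentiableAt (hU.mem_nhds hx0U)
    have h2 := hdA.hasFDerivAt.comp_hasDerivAt s (hx s hs)
    refine h2.congr_deriv ?_
    symm
    have hv : x' s = ∑ i, (x' s i) • (Pi.single i 1 : Fin n → ℝ) := by
      ext j
      simp [Pi.single_apply]
    conv_rhs => rw [hv]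
    rw [map_sum]
    refine Finset.sum_congr rfl fun i _ => ?_
    rw [(fderiv ℝ (fun y => ξ y J) (x s)).map_smul]
    simp [pd, mul_comm]
  -- derivative of components of x'
  have hcomp : ∀ i : Fin n, HasDerivAt (fun r => x' r i) (x'' s i) s :=
    fun i => hasDerivAt_pi.mp (hx' s hs) i
  -- derivative of the product of velocity components
  have hprod : ∀ J : Fin m → Fin n, HasDerivAt (fun r => ∏ c, x' r (J c))
      (∑ c, (∏ e ∈ Finset.univ.erase c, x' s (J e)) * x'' s (J c)) s := by
    intro J
    have := HasDerivAt.fun_finsetProd (u := Finset.univ) (f := fun c r => x' r (J c))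
      (f' := fun c => x'' s (J c)) (fun c _ => hcomp (J c))
    simpa [smul_eq_mul] using this
  have hD : HasDerivAt (fun r => ∑ J : Fin m → Fin n, ξ (x r) J * ∏ c, x' r (J c))
      (∑ J : Fin m → Fin n,
        ((∑ i, pd (fun y => ξ y J) i (x s) * x' s i) * (∏ c, x' s (J c))
          + ξ (x s) J * ∑ c, (∏ e ∈ Finset.univ.erase c, x' s (J e)) * x'' s (J c))) s :=
    HasDerivAt.fun_sum fun J _ => (hchain J).mul (hprod J)
  -- the Lorentz equation solved for x''
  have hw : ∀ i, x'' s i = (∑ j, LorentzF g ω (x s) i j * x' s j)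
      - ∑ j, ∑ k, Christoffel g (x s) i j k * x' s j * x' s k := by
    intro i
    have := lorentz s hs i
    linarith
  -- product over an updated index function
  have hprodupd : ∀ (c : Fin m) (J : Fin m → Fin n) (k : Fin n),
      (∏ e, x' s (Function.update J c k e))
        = x' s k * ∏ e ∈ Finset.univ.erase c, x' s (J e) := by
    intro c J k
    rw [← Finset.mul_prod_erase Finset.univ (fun e => x' s (Function.update J c k e))
      (Finset.mem_univ c), Function.update_self]
    congr 1
    exact Finset.prod_congr rfl fun e he => by
      rw [Function.update_of_ne (Finset.ne_of_mem_erase he)]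
  -- the key reindexing identity, for each slot c
  have key : ∀ c : Fin m,
      (∑ J : Fin m → Fin n, ∑ j, ∑ k,
        ξ (x s) J * (Christoffel g (x s) (J c) j k * x' s j * x' s k)
          * ∏ e ∈ Finset.univ.erase c, x' s (J e))
      = ∑ i, ∑ J : Fin m → Fin n, ∑ k,
          Christoffel g (x s) k i (J c) * ξ (x s) (Function.update J c k) * x' s i
            * ∏ e, x' s (J e) := by
    intro c
    rw [Finset.sum_comm]
    refine Finset.sum_congr rfl fun j _ => ?_
    have hinv : Function.Involutive
        (fun p : (Fin m → Fin n) × Fin n => (Function.update p.1 c p.2, p.1 c)) := by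
      intro p
      simp [Function.update_idem, Function.update_self, Function.update_eq_self]
    rw [← Fintype.sum_prod_type (f := fun p : (Fin m → Fin n) × Fin n =>
          ξ (x s) p.1 * (Christoffel g (x s) (p.1 c) j p.2 * x' s j * x' s p.2)
            * ∏ e ∈ Finset.univ.erase c, x' s (p.1 e)),
        ← Fintype.sum_prod_type (f := fun p : (Fin m → Fin n) × Fin n =>
          Christoffel g (x s) p.2 j (p.1 c) * ξ (x s) (Function.update p.1 c p.2) * x' s j
            * ∏ e, x' s (p.1 e))]
    refine Fintype.sum_bijective _ hinv.bijective _ _ fun p => ?_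
    simp only [Function.update_self, Function.update_idem, Function.update_eq_self,
      hprodupd c p.1 p.2]
    ring
  convert hD using 1
  -- expand the covariant derivative and pass the Christoffel sum to the other side
  have h1 : (∑ i, ∑ J : Fin m → Fin n, covDeriv g ξ i J (x s) * x' s i * ∏ c, x' s (J c))
      = (∑ i, ∑ J : Fin m → Fin n,
          pd (fun y => ξ y J) i (x s) * x' s i * ∏ c, x' s (J c))
        - ∑ i, ∑ J : Fin m → Fin n, ∑ a : Fin m, ∑ k,
            Christoffel g (x s) k i (J a) * ξ (x s) (Function.update J a k) * x' s i
              * ∏ c, x' s (J c) := by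
    rw [← Finset.sum_sub_distrib]
    refine Finset.sum_congr rfl fun i _ => ?_
    rw [← Finset.sum_sub_distrib]
    refine Finset.sum_congr rfl fun J _ => ?_
    rw [covDeriv, sub_mul, sub_mul]
    congr 1
    simp only [Finset.sum_mul]
  have h3 : (∑ J : Fin m → Fin n,
        ((∑ i, pd (fun y => ξ y J) i (x s) * x' s i) * (∏ c, x' s (J c))
          + ξ (x s) J * ∑ c, (∏ e ∈ Finset.univ.erase c, x' s (J e)) * x'' s (J c)))
      = (∑ i, ∑ J : Fin m → Fin n,
          pd (fun y => ξ y J) i (x s) * x' s i * ∏ c, x' s (J c))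
        + ((∑ J : Fin m → Fin n, ∑ c : Fin m,
              ξ (x s) J * (∑ j, LorentzF g ω (x s) (J c) j * x' s j)
                * ∏ e ∈ Finset.univ.erase c, x' s (J e))
           - ∑ J : Fin m → Fin n, ∑ c : Fin m, ∑ j, ∑ k,
              ξ (x s) J * (Christoffel g (x s) (J c) j k * x' s j * x' s k)
                * ∏ e ∈ Finset.univ.erase c, x' s (J e)) := by
    rw [Finset.sum_add_distrib]
    congr 1
    · rw [Finset.sum_comm]
      exact Finset.sum_congr rfl fun J _ => by rw [Finset.sum_mul]
    · rw [← Finset.sum_sub_distrib]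
      refine Finset.sum_congr rfl fun J _ => ?_
      rw [← Finset.sum_sub_distrib, Finset.mul_sum]
      refine Finset.sum_congr rfl fun c _ => ?_
      rw [hw (J c)]
      simp only [mul_sub, Finset.mul_sum, Finset.sum_mul]
      congr 1
      · exact Finset.sum_congr rfl fun j _ => by ring
      · exact Finset.sum_congr rfl fun j _ => Finset.sum_congr rfl fun k _ => by ring
  have hcommF : (∑ J : Fin m → Fin n, ∑ c : Fin m,
        ξ (x s) J * (∑ j, LorentzF g ω (x s) (J c) j * x' s j)
          * ∏ e ∈ Finset.univ.erase c, x' s (J e))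
      = ∑ c : Fin m, ∑ J : Fin m → Fin n,
          ξ (x s) J * (∑ j, LorentzF g ω (x s) (J c) j * x' s j)
            * ∏ e ∈ Finset.univ.erase c, x' s (J e) := Finset.sum_comm
  have hcommG : (∑ J : Fin m → Fin n, ∑ c : Fin m, ∑ j, ∑ k,
        ξ (x s) J * (Christoffel g (x s) (J c) j k * x' s j * x' s k)
          * ∏ e ∈ Finset.univ.erase c, x' s (J e))
      = ∑ c : Fin m, ∑ J : Fin m → Fin n, ∑ j, ∑ k,
          ξ (x s) J * (Christoffel g (x s) (J c) j k * x' s j * x' s k)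
            * ∏ e ∈ Finset.univ.erase c, x' s (J e) := Finset.sum_comm
  have h4 : (∑ c : Fin m, ∑ J : Fin m → Fin n, ∑ j, ∑ k,
        ξ (x s) J * (Christoffel g (x s) (J c) j k * x' s j * x' s k)
          * ∏ e ∈ Finset.univ.erase c, x' s (J e))
      = ∑ i, ∑ J : Fin m → Fin n, ∑ a : Fin m, ∑ k,
          Christoffel g (x s) k i (J a) * ξ (x s) (Function.update J a k) * x' s i
            * ∏ c, x' s (J c) := by
    calc (∑ c : Fin m, ∑ J : Fin m → Fin n, ∑ j, ∑ k,
        ξ (x s) J * (Christoffel g (x s) (J c) j k * x' s j * x' s k)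
          * ∏ e ∈ Finset.univ.erase c, x' s (J e))
        = ∑ a : Fin m, ∑ i, ∑ J : Fin m → Fin n, ∑ k,
            Christoffel g (x s) k i (J a) * ξ (x s) (Function.update J a k) * x' s i
              * ∏ c, x' s (J c) := Finset.sum_congr rfl fun c _ => key c
      _ = ∑ i, ∑ a : Fin m, ∑ J : Fin m → Fin n, ∑ k,
            Christoffel g (x s) k i (J a) * ξ (x s) (Function.update J a k) * x' s i
              * ∏ c, x' s (J c) := Finset.sum_comm
      _ = ∑ i, ∑ J : Fin m → Fin n, ∑ a : Fin m, ∑ k,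
            Christoffel g (x s) k i (J a) * ξ (x s) (Function.update J a k) * x' s i
              * ∏ c, x' s (J c) := Finset.sum_congr rfl fun i _ => Finset.sum_comm
  rw [h1, h3, hcommF, hcommG, h4]
  ring
end

section
/- Let E be a real inner product space, let j ≥ 1 and k ≥ 0 be integers, let ξ : E^j → ℝ be a symmetric j-multilinear map (invariant under all permutations of its arguments), and let F : E →ₗ[ℝ] E be a linear map satisfying ⟪F w, w⟫ = 0 for all w ∈ E. Define the (j+2k)-multilinear map T by T(w₁,…,w_{j+2k}) = ξ(w₁,…,w_j) · Π_{i=1}^{k} ⟪w_{j+2i−1}, w_{j+2i}⟫, and its symmetrization Sym T = (1/(j+2k)!) Σ_{σ ∈ Perm(j+2k)} T ∘ σ. Then for every v ∈ E: (Sym T)(F v, v, …, v) = (j/(j+2k)) · ξ(F v, v, …, v) · ⟪v, v⟫ᵏ. -/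
/-!
Permuting `(F v, v, …, v)` by `σ` only moves `F v` to the slot `σ⁻¹ 0`, so each summand of the
symmetrization depends on that slot alone. In one of the first `j` slots, symmetry of `ξ` turns it
into `ξ(F v, v, …, v) ⟪v, v⟫ᵏ`; in one of the metric slots it produces a factor `⟪F v, v⟫ = 0`.
Every slot is reached by the same number `(j + 2k - 1)!` of permutations, whence the factor
`j / (j + 2k)`.
-/

open Function

theorem Equiv.Perm.card_smul_sum_apply {α M : Type*} [Fintype α] [DecidableEq α]
    [AddCommMonoid M] (f : α → M) (a : α) :
    Fintype.card α • ∑ σ : Equiv.Perm α, f (σ a) = (Fintype.card α).factorial • ∑ b, f b := by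
  have hmove : ∀ b, ∑ σ : Equiv.Perm α, f (σ a) = ∑ σ : Equiv.Perm α, f (σ b) := fun b => by
    rw [← _root_.Equiv.sum_comp (Equiv.mulRight (Equiv.swap a b))]
    simp
  calc Fintype.card α • ∑ σ : Equiv.Perm α, f (σ a)
      = ∑ b, ∑ σ : Equiv.Perm α, f (σ b) := by
        rw [← Finset.card_univ, ← Finset.sum_const]
        exact Finset.sum_congr rfl fun b _ => hmove b
    _ = ∑ σ : Equiv.Perm α, ∑ b, f b := by
        rw [Finset.sum_comm]
        exact Finset.sum_congr rfl fun σ _ => _root_.Equiv.sum_comp σ f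
    _ = (Fintype.card α).factorial • ∑ b, f b := by simp [Fintype.card_perm]

theorem Fin.ite_val_eq_zero_eq_update {n : ℕ} {β : Type*} (h : 0 < n) (a b : β) :
    (fun i : Fin n => if i.1 = 0 then a else b) = update (fun _ => b) ⟨0, h⟩ a := by
  funext i
  simp [update_apply, Fin.ext_iff]

theorem apply_update_const_eq_of_perm_invariant {ι E R : Type*} [DecidableEq ι]
    {f : (ι → E) → R} (hf : ∀ (σ : Equiv.Perm ι) (w : ι → E), f (w ∘ σ) = f w)
    (v u : E) (p q : ι) :
    f (update (fun _ => v) p u) = f (update (fun _ => v) q u) := by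
  rw [← hf (Equiv.swap q p), update_comp_equiv, Equiv.symm_swap, Equiv.swap_apply_right]
  rfl

section TensorMetricPow

variable {E : Type*} [NormedAddCommGroup E] [InnerProductSpace ℝ E] {j : ℕ}

/-- `ξ ⊗ gᵏ` before symmetrization: the metric `g` pairs the slots `j + 2i` and `j + 2i + 1`. -/
def tensorMetricPow (ξ : MultilinearMap ℝ (fun _ : Fin j => E) ℝ) (k : ℕ)
    (w : Fin (j + 2 * k) → E) : ℝ :=
  ξ (fun i => w (Fin.castAdd (2 * k) i)) *
    ∏ i : Fin k,
      (inner ℝ (w (Fin.natAdd j ⟨2 * i.1, by omega⟩))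
        (w (Fin.natAdd j ⟨2 * i.1 + 1, by omega⟩)) : ℝ)

variable (ξ : MultilinearMap ℝ (fun _ : Fin j => E) ℝ) {k : ℕ}

theorem tensorMetricPow_update_castAdd (v u : E) (q : Fin j) :
    tensorMetricPow ξ k (update (fun _ => v) (Fin.castAdd (2 * k) q) u) =
      ξ (update (fun _ => v) q u) * inner ℝ v v ^ k := by
  have hrestrict : (fun i => update (fun _ => v) (Fin.castAdd (2 * k) q) u (Fin.castAdd (2 * k) i))
      = update (fun _ => v) q u :=
    update_comp_eq_of_injective _ (Fin.castAdd_injective j (2 * k)) _ _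
  rw [tensorMetricPow, hrestrict, ← Fin.prod_const]
  congr 1
  refine Finset.prod_congr rfl fun i _ => ?_
  rw [update_of_ne, update_of_ne] <;> simp [Fin.ext_iff] <;> omega

theorem tensorMetricPow_update_natAdd {v u : E} (hu : inner ℝ u v = (0 : ℝ))
    (r : Fin (2 * k)) :
    tensorMetricPow ξ k (update (fun _ => v) (Fin.natAdd j r) u) = 0 := by
  rw [tensorMetricPow]
  apply mul_eq_zero_of_right
  obtain ⟨m, hm | hm⟩ := Nat.even_or_odd' r
  · apply Finset.prod_eq_zero (Finset.mem_univ ⟨m, by omega⟩)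
    simp [update_apply, Fin.ext_iff, hm, hu]
  · apply Finset.prod_eq_zero (Finset.mem_univ ⟨m, by omega⟩)
    simp [update_apply, Fin.ext_iff, hm, ← add_assoc, real_inner_comm u v, hu]

end TensorMetricPow

/-- Let `ξ` be a symmetric `j`-multilinear form (`j ≥ 1`), `F` linear with
`⟪F w, w⟫ = 0`, and let `T(w₁,…,w_{j+2k}) = ξ(w₁,…,w_j) · Π_{i=1}^{k} ⟪w_{j+2i-1}, w_{j+2i}⟫`.
Then the symmetrization of `T` evaluated at `(F v, v, …, v)` equals
`(j/(j+2k)) · ξ(F v, v, …, v) · ⟪v,v⟫ᵏ`. -/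
theorem sym_tensor_metric_commutation
    (E : Type*) [NormedAddCommGroup E] [InnerProductSpace ℝ E]
    (j k : ℕ) (hj : 1 ≤ j)
    (ξ : MultilinearMap ℝ (fun _ : Fin j => E) ℝ)
    (hξsymm : ∀ (σ : Equiv.Perm (Fin j)) (w : Fin j → E), ξ (w ∘ σ) = ξ w)
    (F : E →ₗ[ℝ] E) (hF : ∀ w : E, (inner ℝ (F w) w : ℝ) = 0)
    (T : (Fin (j + 2 * k) → E) → ℝ)
    (hT : ∀ w : Fin (j + 2 * k) → E,
      T w = ξ (fun i => w (Fin.castAdd (2 * k) i)) *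
        ∏ i : Fin k,
          (inner ℝ (w ⟨j + 2 * i.1, by have := i.2; omega⟩)
                 (w ⟨j + 2 * i.1 + 1, by have := i.2; omega⟩) : ℝ)) :
    ∀ v : E,
      (1 / (Nat.factorial (j + 2 * k) : ℝ)) *
          ∑ σ : Equiv.Perm (Fin (j + 2 * k)),
            T ((fun i : Fin (j + 2 * k) => if i.1 = 0 then F v else v) ∘ σ)
        = ((j : ℝ) / ((j : ℝ) + 2 * k)) *
            ξ (fun i : Fin j => if i.1 = 0 then F v else v) * (inner ℝ v v : ℝ) ^ k := by
  intro v
  have hz : 0 < j + 2 * k := by omega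
  have hT' : T = tensorMetricPow ξ k := funext hT
  have hperm : ∀ σ : Equiv.Perm (Fin (j + 2 * k)),
      (fun i : Fin (j + 2 * k) => if i.1 = 0 then F v else v) ∘ σ =
        update (fun _ => v) (σ⁻¹ ⟨0, hz⟩) (F v) := fun σ => by
    rw [Fin.ite_val_eq_zero_eq_update hz, update_comp_equiv]
    rfl
  have hξ : ∀ q : Fin j, ξ (update (fun _ => v) q (F v)) =
      ξ (fun i : Fin j => if i.1 = 0 then F v else v) := fun q => by
    rw [Fin.ite_val_eq_zero_eq_update hj, apply_update_const_eq_of_perm_invariant hξsymm]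
  have hsum_update : ∑ p, T (update (fun _ => v) p (F v)) =
      j * (ξ (fun i : Fin j => if i.1 = 0 then F v else v) * inner ℝ v v ^ k) := by
    simp [hT', Fin.sum_univ_add, tensorMetricPow_update_castAdd, hξ,
      tensorMetricPow_update_natAdd ξ (hF v)]
  have hsum_perm : ((j + 2 * k : ℕ) : ℝ) *
      ∑ σ : Equiv.Perm (Fin (j + 2 * k)), T (update (fun _ => v) (σ⁻¹ ⟨0, hz⟩) (F v)) =
      (j + 2 * k).factorial * ∑ p, T (update (fun _ => v) p (F v)) := by
    rw [← Equiv.sum_comp (Equiv.inv _)]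
    simpa using Equiv.Perm.card_smul_sum_apply (fun p => T (update (fun _ => v) p (F v))) ⟨0, hz⟩
  simp only [hperm]
  rw [hsum_update] at hsum_perm
  push_cast at hsum_perm
  field_simp
  linear_combination hsum_perm
end

section
/- Let H be a real Banach space and S ⊆ H a closed linear subspace (a Submodule that is closed). Let u : ℝ → H be continuous with compact support. If the moment ∫_ℝ tᵏ • u(t) dt (a Bochner integral) belongs to S for every k ∈ ℕ, then u(t) ∈ S for every t ∈ ℝ. -/
/-!
Pushing `u` to the quotient `H ⧸ S` reduces the claim to: a continuous compactly supported
function all of whose moments vanish is zero. By Hahn–Banach it suffices to check this for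
real-valued `f`. Then `∫ p f = 0` for every polynomial `p`, and approximating `f` uniformly by
polynomials on an interval containing its support (Weierstrass) gives `∫ f² = 0`, so `f = 0`.
-/

open MeasureTheory Polynomial Set

section Moments

variable {f : ℝ → ℝ}

theorem integral_eval_mul_eq_zero_of_integral_pow_mul_eq_zero (hf : Continuous f)
    (hsupp : HasCompactSupport f) (h : ∀ k : ℕ, ∫ t, t ^ k * f t = 0) (p : ℝ[X]) :
    ∫ t, p.eval t * f t = 0 := by
  have hint (k : ℕ) : Integrable fun t => p.coeff k * (t ^ k * f t) :=
    (((continuous_pow k).mul hf).integrable_of_hasCompactSupport hsupp.mul_left).const_mul _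
  simp_rw [eval_eq_sum_range, Finset.sum_mul, mul_assoc]
  rw [integral_finsetSum _ fun k _ => hint k]
  exact Finset.sum_eq_zero fun k _ => by rw [integral_const_mul, h k, mul_zero]

theorem integral_mul_self_le_of_forall_abs_eval_sub_lt (hf : Continuous f)
    (hsupp : HasCompactSupport f) {R ε : ℝ} (hR : tsupport f ⊆ Icc (-R) R) {p : ℝ[X]}
    (hp : ∀ t ∈ Icc (-R) R, |p.eval t - f t| < ε) (hp_orth : ∫ t, p.eval t * f t = 0) :
    ∫ t, f t * f t ≤ ε * ∫ t, |f t| := by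
  have hbound (t : ℝ) : ‖(f t - p.eval t) * f t‖ ≤ ε * |f t| := by
    by_cases ht : t ∈ Icc (-R) R
    · rw [Real.norm_eq_abs, abs_mul, abs_sub_comm]
      exact mul_le_mul_of_nonneg_right (hp t ht).le (abs_nonneg _)
    · simp [image_eq_zero_of_notMem_tsupport fun hmem => ht (hR hmem)]
  calc ∫ t, f t * f t = ∫ t, (f t - p.eval t) * f t := by
        have hff : Integrable fun t => f t * f t :=
          (hf.mul hf).integrable_of_hasCompactSupport hsupp.mul_left
        have hpf : Integrable fun t => p.eval t * f t :=
          (p.continuous.mul hf).integrable_of_hasCompactSupport hsupp.mul_left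
        simp_rw [sub_mul]
        rw [integral_sub hff hpf, hp_orth, sub_zero]
    _ ≤ ‖∫ t, (f t - p.eval t) * f t‖ := Real.le_norm_self _
    _ ≤ ∫ t, ε * |f t| :=
        norm_integral_le_of_norm_le
          ((hf.integrable_of_hasCompactSupport hsupp).abs.const_mul ε) (.of_forall hbound)
    _ = ε * ∫ t, |f t| := integral_const_mul _ _

theorem eq_zero_of_integral_pow_mul_eq_zero (hf : Continuous f) (hsupp : HasCompactSupport f)
    (h : ∀ k : ℕ, ∫ t, t ^ k * f t = 0) : f = 0 := by
  obtain ⟨R, hR⟩ : ∃ R : ℝ, tsupport f ⊆ Icc (-R) R := by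
    obtain ⟨r, hr⟩ := (Metric.isBounded_iff_subset_closedBall (0 : ℝ)).mp hsupp.isBounded
    exact ⟨r, by simpa [Real.closedBall_eq_Icc] using hr⟩
  set C := ∫ t, |f t|
  have hC : 0 ≤ C := integral_nonneg fun t => abs_nonneg _
  have hsq_nonpos : ∫ t, f t * f t ≤ 0 := by
    refine le_of_forall_pos_le_add fun ε hε => ?_
    obtain ⟨p, hp⟩ := exists_polynomial_near_of_continuousOn (-R) R f hf.continuousOn
      (ε / (C + 1)) (by positivity)
    calc ∫ t, f t * f t ≤ ε / (C + 1) * C :=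
          integral_mul_self_le_of_forall_abs_eval_sub_lt hf hsupp hR hp
            (integral_eval_mul_eq_zero_of_integral_pow_mul_eq_zero hf hsupp h p)
      _ ≤ 0 + ε := by
          rw [zero_add, div_mul_eq_mul_div, div_le_iff₀ (by positivity)]
          nlinarith
  funext t
  by_contra hft
  have hsq_pos : 0 < ∫ t, f t * f t :=
    (hf.mul hf).integral_pos_of_hasCompactSupport_nonneg_nonzero hsupp.mul_left
      (fun t => mul_self_nonneg (f t)) (mul_self_ne_zero.mpr hft)
  exact hsq_pos.not_ge hsq_nonpos

theorem eq_zero_of_integral_pow_smul_eq_zero {E : Type*} [NormedAddCommGroup E]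
    [NormedSpace ℝ E] [CompleteSpace E] {v : ℝ → E} (hv : Continuous v)
    (hsupp : HasCompactSupport v) (h : ∀ k : ℕ, ∫ t, t ^ k • v t = 0) : v = 0 := by
  funext t
  refine SeparatingDual.eq_zero_of_forall_dual_eq_zero (R := ℝ) fun φ => ?_
  have hmom (k : ℕ) : ∫ s, s ^ k * φ (v s) = 0 := by
    have hint : Integrable fun s : ℝ => s ^ k • v s :=
      ((continuous_pow k).smul hv).integrable_of_hasCompactSupport hsupp.smul_left
    simp_rw [← smul_eq_mul, ← φ.map_smul]
    rw [φ.integral_comp_comm hint, h k, map_zero]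
  exact congrFun (eq_zero_of_integral_pow_mul_eq_zero (φ.continuous.comp hv)
    (hsupp.comp_left φ.map_zero) hmom) t

end Moments

/-- If `u : ℝ → H` is continuous with compact support, with values in a real
Banach space `H`, `S` is a closed linear subspace of `H`, and every moment
`∫ t, tᵏ • u(t) dt` lies in `S`, then `u(t) ∈ S` for every `t ∈ ℝ`. -/
theorem moments_in_closed_subspace
    (H : Type*) [NormedAddCommGroup H] [NormedSpace ℝ H] [CompleteSpace H]
    (S : Submodule ℝ H) (hS : IsClosed (S : Set H))
    (u : ℝ → H) (hu : Continuous u) (hsupp : HasCompactSupport u)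
    (h : ∀ k : ℕ, (∫ t : ℝ, t ^ k • u t) ∈ S) :
    ∀ t : ℝ, u t ∈ S := by
  have : IsClosed (S : Set H) := hS -- instance making `H ⧸ S` a Banach space
  have hmom (k : ℕ) : ∫ t, t ^ k • S.mkQL (u t) = 0 := by
    have hint : Integrable fun t : ℝ => t ^ k • u t :=
      ((continuous_pow k).smul hu).integrable_of_hasCompactSupport hsupp.smul_left
    simp_rw [← S.mkQL.map_smul]
    rw [S.mkQL.integral_comp_comm hint]
    exact (Submodule.Quotient.mk_eq_zero S).mpr (h k)
  intro t
  have hquot := eq_zero_of_integral_pow_smul_eq_zero (S.mkQL.continuous.comp hu)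
    (hsupp.comp_left S.mkQL.map_zero) hmom
  exact (Submodule.Quotient.mk_eq_zero S).mp (congrFun hquot t)
end
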